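/- For p, q ∈ [0,1] with 0 < q < 1, the binary entropy of the binary convolution satisfies H₂(p*q) ≥ max(H₂(p), H₂(q)), and H₂(p*q) = H₂(p) + H₂(q) implies p ∈ {0,1} or H₂(q) = 0; in particular if 0 < H₂(q) then H₂(p*q) = H₂(p) + H₂(q) forces H₂(p) = 0. -/

import Mathlib

/-- The binary entropy function `H₂(t) = −t log₂ t − (1−t) log₂ (1−t)`. -/
noncomputable def H2 (t : ℝ) : ℝ := -(t * Real.logb 2 t) - (1 - t) * Real.logb 2 (1 - t)

/-- The binary convolution `p * q = p(1−q) + (1−p)q`. -/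
def bconv (p q : ℝ) : ℝ := p * (1 - q) + (1 - p) * q

/-!
`H₂(p*q)` dominates `H₂(q)` because `p*q` is a convex combination of `q` and `1 - q`, on which
the concave function `H₂` takes the same value; by symmetry of `*` it also dominates `H₂(p)`.

For the equality case, `H₂(p) + H₂(q)` is the entropy `∑ -x log x` of the four joint
probabilities `pq, p(1-q), (1-p)q, (1-p)(1-q)`, while `H₂(p*q)` is the entropy of the two sums
`p(1-q) + (1-p)q` and `pq + (1-p)(1-q)`. Since `x ↦ -x log x` is strictly subadditive on
positive reals, merging atoms strictly lowers entropy as soon as `p, q ∈ (0,1)`.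
-/

open Real Set

lemma H2_eq_binEntropy_div (t : ℝ) : H2 t = binEntropy t / log 2 := by
  simp only [H2, binEntropy, logb, log_inv]
  ring

lemma bconv_comm (p q : ℝ) : bconv p q = bconv q p := by
  simp only [bconv]; ring

lemma one_sub_bconv (p q : ℝ) : 1 - bconv p q = p * q + (1 - p) * (1 - q) := by
  simp only [bconv]; ring

lemma binEntropy_le_binEntropy_bconv {p q : ℝ} (hp : p ∈ Icc (0 : ℝ) 1)
    (hq : q ∈ Icc (0 : ℝ) 1) : binEntropy q ≤ binEntropy (bconv p q) := by
  have h := strictConcave_binEntropy.concaveOn.2 hq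
    (show 1 - q ∈ Icc (0 : ℝ) 1 from ⟨by linarith [hq.2], by linarith [hq.1]⟩)
    (sub_nonneg.2 hp.2) hp.1 (sub_add_cancel 1 p)
  simp only [smul_eq_mul, binEntropy_one_sub] at h
  have hmix : (1 - p) * q + p * (1 - q) = bconv p q := by simp only [bconv]; ring
  rwa [← add_mul, sub_add_cancel, one_mul, hmix] at h

lemma negMulLog_add_lt {x y : ℝ} (hx : 0 < x) (hy : 0 < y) :
    negMulLog (x + y) < negMulLog x + negMulLog y := by
  have hlx : log x < log (x + y) := log_lt_log hx (by linarith)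
  have hly : log y < log (x + y) := log_lt_log hy (by linarith)
  simp only [negMulLog]
  nlinarith [mul_lt_mul_of_pos_left hlx hx, mul_lt_mul_of_pos_left hly hy]

lemma binEntropy_add_binEntropy (p q : ℝ) :
    binEntropy p + binEntropy q =
      negMulLog (p * (1 - q)) + negMulLog ((1 - p) * q) +
        (negMulLog (p * q) + negMulLog ((1 - p) * (1 - q))) := by
  simp only [binEntropy_eq_negMulLog_add_negMulLog_one_sub, negMulLog_mul]
  ring

lemma binEntropy_bconv_lt_add {p q : ℝ} (hp : p ∈ Ioo (0 : ℝ) 1) (hq : q ∈ Ioo (0 : ℝ) 1) :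
    binEntropy (bconv p q) < binEntropy p + binEntropy q := by
  obtain ⟨hp₀, hp₁⟩ := hp
  obtain ⟨hq₀, hq₁⟩ := hq
  have hp' : 0 < 1 - p := sub_pos.2 hp₁
  have hq' : 0 < 1 - q := sub_pos.2 hq₁
  rw [binEntropy_eq_negMulLog_add_negMulLog_one_sub, one_sub_bconv, binEntropy_add_binEntropy]
  exact add_lt_add (negMulLog_add_lt (by positivity) (by positivity))
    (negMulLog_add_lt (by positivity) (by positivity))

/-- For `p ∈ [0,1]` and `0 < q < 1`: `H₂(p*q) ≥ max(H₂(p), H₂(q))`; equality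
`H₂(p*q) = H₂(p) + H₂(q)` implies `p ∈ {0,1}` or `H₂(q) = 0`; and in particular, if
`0 < H₂(q)` then `H₂(p*q) = H₂(p) + H₂(q)` forces `H₂(p) = 0`. -/
theorem stmt_12 (p q : ℝ) (hp : p ∈ Set.Icc (0 : ℝ) 1) (hq : q ∈ Set.Ioo (0 : ℝ) 1) :
    H2 (bconv p q) ≥ max (H2 p) (H2 q) ∧
    (H2 (bconv p q) = H2 p + H2 q → p = 0 ∨ p = 1 ∨ H2 q = 0) ∧
    (0 < H2 q → H2 (bconv p q) = H2 p + H2 q → H2 p = 0) := by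
  have hlog2 : 0 < log 2 := log_pos one_lt_two
  have hqI : q ∈ Icc (0 : ℝ) 1 := Ioo_subset_Icc_self hq
  have hextreme : H2 (bconv p q) = H2 p + H2 q → p = 0 ∨ p = 1 := by
    intro heq
    by_contra! hp01
    have hpI : p ∈ Ioo (0 : ℝ) 1 :=
      ⟨hp.1.lt_of_ne (Ne.symm hp01.1), hp.2.lt_of_ne hp01.2⟩
    rw [H2_eq_binEntropy_div, H2_eq_binEntropy_div, H2_eq_binEntropy_div, ← add_div,
      div_left_inj' hlog2.ne'] at heq
    exact (binEntropy_bconv_lt_add hpI hq).ne heq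
  refine ⟨?_, fun heq => (hextreme heq).elim Or.inl (Or.inr ∘ Or.inl), fun _ heq => ?_⟩
  · simp only [H2_eq_binEntropy_div, ge_iff_le, max_le_iff,
      div_le_div_iff_of_pos_right hlog2]
    exact ⟨bconv_comm p q ▸ binEntropy_le_binEntropy_bconv hqI hp,
      binEntropy_le_binEntropy_bconv hp hqI⟩
  · rcases hextreme heq with rfl | rfl <;> simp [H2_eq_binEntropy_div]
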